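/- Under the zero-forcing constraint, for any P×K matrix H with rank(H) ≥ M, positive definite noise covariance R_vv, and any feasible triple (F, B, W) with tr(FFᴴ) ≤ p0 and WHF = B + I with B strictly upper triangular, the arithmetic MSE tr(W R_vv Wᴴ)/M is bounded below by (M/p0)·(∏_{i=1}^M λ_i)^(−1/M), where λ1 ≥ … ≥ λ_M are the M largest eigenvalues of Hᴴ R_vv^{-1} H. -/

import Mathlib

open Matrix ComplexOrder Finset
open scoped MatrixOrder

/-!
Whiten the noise: writing `R_vv = Sᴴ S`, the zero-forcing condition says that
`(W Sᴴ) (S⁻ᴴ H F) = B + 1` has determinant `1`, so Cauchy–Binet and Cauchy–Schwarz give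
`1 ≤ det (W R_vv Wᴴ) · det (Fᴴ Hᴴ R_vv⁻¹ H F)`. Expanding the second determinant by Cauchy–Binet
in the eigenbasis of `Hᴴ R_vv⁻¹ H`, every `M × M` minor is weighted by a product of `M` distinct
eigenvalues, at most `λ_1 ⋯ λ_M`, whence it is at most `(∏ λ_i) · det (Fᴴ F)`. Finally AM–GM on
the eigenvalues bounds `det X` by `(tr X / M) ^ M` for both positive semidefinite Gram matrices,
and `tr (F Fᴴ) ≤ p0`.
-/

theorem Real.prod_le_sum_div_card_pow {ι : Type*} (s : Finset ι) {z : ι → ℝ}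
    (hz : ∀ i ∈ s, 0 ≤ z i) : ∏ i ∈ s, z i ≤ ((∑ i ∈ s, z i) / #s) ^ #s := by
  rcases s.eq_empty_or_nonempty with rfl | hs
  · simp
  have hcard : (0 : ℝ) < #s := by exact_mod_cast hs.card_pos
  have hgm := Real.geom_mean_le_arith_mean s (fun _ => 1) z (fun _ _ => zero_le_one)
    (by simpa using hcard) hz
  simp only [Real.rpow_one, one_mul, sum_const, nsmul_eq_mul, mul_one] at hgm
  calc ∏ i ∈ s, z i = ((∏ i ∈ s, z i) ^ ((#s : ℝ)⁻¹)) ^ #s :=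
        (Real.rpow_inv_natCast_pow (prod_nonneg hz) hs.card_pos.ne').symm
    _ ≤ _ := pow_le_pow_left₀ (Real.rpow_nonneg (prod_nonneg hz) _) hgm _

theorem Real.rpow_neg_one_div_le_of_one_le_pow_mul {n : ℕ} (hn : n ≠ 0) {x L : ℝ} (hx : 0 ≤ x)
    (hL : 0 ≤ L) (h : 1 ≤ x ^ n * L) : L ^ (-(1:ℝ) / n) ≤ x := by
  have hLpos : 0 < L := hL.lt_of_ne fun h0 => by simp [← h0] at h; linarith
  have hinv : L⁻¹ ≤ x ^ n := by rwa [inv_le_iff_one_le_mul₀ hLpos]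
  calc L ^ (-(1:ℝ) / n) = L⁻¹ ^ ((n : ℝ)⁻¹) := by
        rw [neg_div, Real.rpow_neg hL, Real.inv_rpow hL, one_div]
    _ ≤ (x ^ n) ^ ((n : ℝ)⁻¹) := Real.rpow_le_rpow (inv_nonneg.mpr hL) hinv (by positivity)
    _ = x := Real.pow_rpow_inv_natCast hx hn

theorem Fin.castLE_le_orderEmbedding {m k : ℕ} (h : m ≤ k) (g : Fin m ↪o Fin k) (i : Fin m) :
    Fin.castLE h i ≤ g i := by
  have hsub : (Iic i).map g.toEmbedding ⊆ Iic (g i) := by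
    intro x hx
    simp only [mem_map, mem_Iic] at hx ⊢
    obtain ⟨j, hj, rfl⟩ := hx
    exact g.le_iff_le.mpr hj
  simpa [Fin.le_def] using card_le_card hsub

theorem Tuple.bijective_orderEmbedding_comp_perm {m : ℕ} {ι : Type*} [LinearOrder ι] :
    Function.Bijective fun x : (Fin m ↪o ι) × Equiv.Perm (Fin m) =>
      (⟨x.1 ∘ x.2, x.1.injective.comp x.2.injective⟩ :
        {p : Fin m → ι // Function.Injective p}) := by
  constructor
  · rintro ⟨g, σ⟩ ⟨g', σ'⟩ h
    have hcomp : g ∘ σ = g' ∘ σ' := congrArg Subtype.val h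
    have hg : g = g' := by
      apply DFunLike.coe_injective
      rw [← g.strictMono.range_inj g'.strictMono, ← σ.surjective.range_comp g, hcomp,
        σ'.surjective.range_comp]
    subst hg
    exact Prod.ext rfl (Equiv.ext fun i => g.injective (congrFun hcomp i))
  · rintro ⟨p, hp⟩
    have hmono : StrictMono (p ∘ Tuple.sort p) :=
      (Tuple.monotone_sort p).strictMono_of_injective (hp.comp (Tuple.sort p).injective)
    refine ⟨(OrderEmbedding.ofStrictMono _ hmono, (Tuple.sort p)⁻¹), Subtype.ext ?_⟩
    funext i
    simp

namespace Matrix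

theorem det_add_one_of_strictUpperTriangular {R n : Type*} [CommRing R] [Fintype n]
    [DecidableEq n] [LinearOrder n] {B : Matrix n n R} (hB : ∀ i j, j ≤ i → B i j = 0) :
    det (B + 1) = 1 := by
  rw [det_of_isUpperTriangular fun i j (hji : j < i) => by
    simp [hB i j hji.le, one_apply_ne hji.ne']]
  exact prod_eq_one fun i _ => by simp [hB i i le_rfl]

section CauchyBinet

variable {R : Type*} [CommRing R] {m : ℕ} {ι : Type*} [Fintype ι]

theorem det_mul_eq_sum_det_submatrix_mul_prod (A : Matrix (Fin m) ι R) (B : Matrix ι (Fin m) R) :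
    det (A * B) = ∑ p : Fin m → ι, det (A.submatrix id p) * ∏ i, B (p i) i := by
  calc det (A * B) = ∑ p : Fin m → ι, ∑ σ : Equiv.Perm (Fin m),
        ((Equiv.Perm.sign σ : ℤ) : R) * ∏ i, A (σ i) (p i) * B (p i) i := by
        simp only [det_apply', mul_apply, prod_univ_sum, mul_sum, Fintype.piFinset_univ]
        rw [sum_comm]
    _ = _ := by
        refine sum_congr rfl fun p _ => ?_
        simp only [det_apply', sum_mul, prod_mul_distrib, submatrix_apply, id, mul_assoc]

theorem det_mul_eq_sum_orderEmbedding [LinearOrder ι] (A : Matrix (Fin m) ι R)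
    (B : Matrix ι (Fin m) R) :
    det (A * B) = ∑ g : Fin m ↪o ι, det (A.submatrix id g) * det (B.submatrix g id) := by
  classical
  have hnoninj : ∀ p : Fin m → ι, ¬ Function.Injective p → det (A.submatrix id p) = 0 := by
    intro p hp
    obtain ⟨i, j, hpij, hij⟩ := Function.not_injective_iff.mp hp
    exact det_zero_of_column_eq hij fun r => by simp [hpij]
  rw [det_mul_eq_sum_det_submatrix_mul_prod, ← sum_subset (subset_univ
      (univ.filter Function.Injective)) fun p _ hp => by
      rw [hnoninj p (by simpa using hp), zero_mul],
    sum_subtype _ (p := Function.Injective) (fun p => by simp),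
    ← Fintype.sum_bijective _ Tuple.bijective_orderEmbedding_comp_perm _ _ fun _ => rfl,
    Fintype.sum_prod_type]
  refine Fintype.sum_congr _ _ fun g => ?_
  simp only [det_apply' (B.submatrix g id), mul_sum]
  refine Fintype.sum_congr _ _ fun σ => ?_
  rw [show A.submatrix id (g ∘ σ) = (A.submatrix id g).submatrix id σ from rfl, det_permute']
  simp only [submatrix_apply, id, Function.comp_apply]
  ring

end CauchyBinet

section RCLike

variable {𝕜 : Type*} [RCLike 𝕜]

theorem PosSemidef.re_det_le_div_card_pow {n : Type*} [Fintype n] [DecidableEq n]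
    {X : Matrix n n 𝕜} (hX : X.PosSemidef) {t : ℝ} (ht : RCLike.re X.trace ≤ t) :
    RCLike.re X.det ≤ (t / Fintype.card n) ^ Fintype.card n := by
  have htr : 0 ≤ RCLike.re X.trace := (RCLike.nonneg_iff.mp hX.trace_nonneg).1
  calc RCLike.re X.det ≤ (RCLike.re X.trace / Fintype.card n) ^ Fintype.card n := by
        rw [hX.isHermitian.det_eq_prod_eigenvalues, hX.isHermitian.trace_eq_sum_eigenvalues,
          ← RCLike.ofReal_prod, ← RCLike.ofReal_sum, RCLike.ofReal_re, RCLike.ofReal_re]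
        exact Real.prod_le_sum_div_card_pow univ fun i _ => hX.eigenvalues_nonneg i
    _ ≤ (t / Fintype.card n) ^ Fintype.card n :=
        pow_le_pow_left₀ (div_nonneg htr (Nat.cast_nonneg _)) (by gcongr) _

variable {m : ℕ} {ι : Type*} [Fintype ι] [LinearOrder ι]

theorem re_det_conjTranspose_mul_diagonal_mul (X : Matrix ι (Fin m) 𝕜) (d : ι → ℝ) :
    RCLike.re (det (Xᴴ * diagonal (fun i => (d i : 𝕜)) * X)) =
      ∑ g : Fin m ↪o ι, (∏ i, d (g i)) * ‖det (X.submatrix g id)‖ ^ 2 := by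
  classical
  have hminor : ∀ g : Fin m ↪o ι,
      det ((Xᴴ).submatrix id g) * det ((diagonal (fun i => (d i : 𝕜)) * X).submatrix g id) =
        (((∏ i, d (g i)) * ‖det (X.submatrix g id)‖ ^ 2 : ℝ) : 𝕜) := by
    intro g
    rw [show (diagonal (fun i => (d i : 𝕜)) * X).submatrix g id =
        diagonal (fun i => (d (g i) : 𝕜)) * X.submatrix g id by ext; simp [diagonal_mul],
      show (Xᴴ).submatrix id g = (X.submatrix g id)ᴴ from rfl, det_conjTranspose, det_mul,
      det_diagonal, mul_left_comm]
    push_cast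
    rw [RCLike.star_def, RCLike.conj_mul]
  rw [Matrix.mul_assoc, det_mul_eq_sum_orderEmbedding, Fintype.sum_congr _ _ hminor,
    ← RCLike.ofReal_sum, RCLike.ofReal_re]

theorem re_det_conjTranspose_mul_self (X : Matrix ι (Fin m) 𝕜) :
    RCLike.re (det (Xᴴ * X)) = ∑ g : Fin m ↪o ι, ‖det (X.submatrix g id)‖ ^ 2 := by
  classical
  simpa using re_det_conjTranspose_mul_diagonal_mul X 1

theorem re_det_conjTranspose_mul_diagonal_mul_le {k : ℕ} (hmk : m ≤ k)
    (X : Matrix (Fin k) (Fin m) 𝕜) {d : Fin k → ℝ} (hd : Antitone d) (hd0 : ∀ i, 0 ≤ d i) :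
    RCLike.re (det (Xᴴ * diagonal (fun i => (d i : 𝕜)) * X)) ≤
      (∏ i, d (Fin.castLE hmk i)) * RCLike.re (det (Xᴴ * X)) := by
  rw [re_det_conjTranspose_mul_diagonal_mul, re_det_conjTranspose_mul_self, mul_sum]
  refine sum_le_sum fun g _ => mul_le_mul_of_nonneg_right ?_ (sq_nonneg _)
  exact prod_le_prod (fun i _ => hd0 _) fun i _ => hd (Fin.castLE_le_orderEmbedding hmk g i)

theorem re_det_conjTranspose_mul_mul_le {k : ℕ} (hmk : m ≤ k) {A V : Matrix (Fin k) (Fin k) 𝕜}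
    {d : Fin k → ℝ} (hV : Vᴴ * V = 1) (hA : A = V * diagonal (fun i => (d i : 𝕜)) * Vᴴ)
    (hd : Antitone d) (hd0 : ∀ i, 0 ≤ d i) (X : Matrix (Fin k) (Fin m) 𝕜) :
    RCLike.re (det (Xᴴ * A * X)) ≤ (∏ i, d (Fin.castLE hmk i)) * RCLike.re (det (Xᴴ * X)) := by
  subst hA
  have hVX : (Vᴴ * X)ᴴ * (Vᴴ * X) = Xᴴ * X := by
    rw [conjTranspose_mul, conjTranspose_conjTranspose, Matrix.mul_assoc, ← Matrix.mul_assoc V,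
      mul_eq_one_comm.mp hV, Matrix.one_mul]
  rw [← hVX]
  convert re_det_conjTranspose_mul_diagonal_mul_le hmk (Vᴴ * X) hd hd0 using 3
  simp only [conjTranspose_mul, conjTranspose_conjTranspose, Matrix.mul_assoc]

theorem norm_det_mul_sq_le (A : Matrix (Fin m) ι 𝕜) (B : Matrix ι (Fin m) 𝕜) :
    ‖det (A * B)‖ ^ 2 ≤ RCLike.re (det (A * Aᴴ)) * RCLike.re (det (Bᴴ * B)) := by
  have htriangle : ‖det (A * B)‖ ≤
      ∑ g : Fin m ↪o ι, ‖det ((Aᴴ).submatrix g id)‖ * ‖det (B.submatrix g id)‖ := by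
    rw [det_mul_eq_sum_orderEmbedding]
    refine (norm_sum_le _ _).trans (le_of_eq (Fintype.sum_congr _ _ fun g => ?_))
    rw [norm_mul, show (Aᴴ).submatrix g id = (A.submatrix id g)ᴴ from rfl, det_conjTranspose,
      norm_star]
  rw [show A * Aᴴ = Aᴴᴴ * Aᴴ by rw [conjTranspose_conjTranspose], re_det_conjTranspose_mul_self,
    re_det_conjTranspose_mul_self]
  exact (pow_le_pow_left₀ (norm_nonneg _) htriangle 2).trans (sum_mul_sq_le_sq_mul_sq _ _ _)

theorem norm_det_mul_sq_le_of_posDef [DecidableEq ι] {R : Matrix ι ι 𝕜} (hR : R.PosDef)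
    (A : Matrix (Fin m) ι 𝕜) (B : Matrix ι (Fin m) 𝕜) :
    ‖det (A * B)‖ ^ 2 ≤ RCLike.re (det (A * R * Aᴴ)) * RCLike.re (det (Bᴴ * R⁻¹ * B)) := by
  obtain ⟨S, rfl⟩ := CStarAlgebra.nonneg_iff_eq_star_mul_self.mp hR.posSemidef.nonneg
  have hS : IsUnit S := isUnit_of_mul_isUnit_right hR.isUnit
  have hSinv : S⁻¹ * S = 1 := nonsing_inv_mul S ((isUnit_iff_isUnit_det S).mp hS)
  convert norm_det_mul_sq_le (A * Sᴴ) ((S⁻¹)ᴴ * B) using 3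
  · rw [Matrix.mul_assoc, ← Matrix.mul_assoc Sᴴ, ← conjTranspose_mul, hSinv, conjTranspose_one,
      Matrix.one_mul]
  · simp [Matrix.mul_assoc, star_eq_conjTranspose]
  · simp [mul_inv_rev, Matrix.mul_assoc, conjTranspose_nonsing_inv, star_eq_conjTranspose]

end RCLike

end Matrix

theorem stmt9_general (P K M : ℕ) (hM : 0 < M) (hMK : M ≤ K)
    (H : Matrix (Fin P) (Fin K) ℂ)
    (Rvv : Matrix (Fin P) (Fin P) ℂ) (hRvv : Rvv.PosDef)
    (p0 : ℝ) (hp0 : 0 < p0)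
    (V : Matrix (Fin K) (Fin K) ℂ) (hV : Vᴴ * V = 1)
    (lam : Fin K → ℝ) (hmono : ∀ i j : Fin K, i ≤ j → lam j ≤ lam i)
    (hnn : ∀ i, 0 ≤ lam i)
    (hA : Hᴴ * Rvv⁻¹ * H = V * Matrix.diagonal (fun i => (lam i : ℂ)) * Vᴴ)
    (F : Matrix (Fin K) (Fin M) ℂ) (W : Matrix (Fin M) (Fin P) ℂ)
    (B : Matrix (Fin M) (Fin M) ℂ) (hB : ∀ i j : Fin M, j ≤ i → B i j = 0)
    (hpow : (F * Fᴴ).trace.re ≤ p0)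
    (hZF : W * H * F = B + 1) :
    (W * Rvv * Wᴴ).trace.re / M ≥
      (M / p0) * (∏ i : Fin M, lam (Fin.castLE hMK i)) ^ (-(1:ℝ)/M) := by
  set L := ∏ i : Fin M, lam (Fin.castLE hMK i)
  set t := (W * Rvv * Wᴴ).trace.re
  have hWRW := hRvv.posSemidef.mul_mul_conjTranspose_same W
  have hdet : det (W * (H * F)) = 1 := by
    rw [← Matrix.mul_assoc, hZF, det_add_one_of_strictUpperTriangular hB]
  have hcompress : (H * F)ᴴ * Rvv⁻¹ * (H * F) = Fᴴ * (Hᴴ * Rvv⁻¹ * H) * F := by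
    simp only [conjTranspose_mul, Matrix.mul_assoc]
  have hCS := norm_det_mul_sq_le_of_posDef hRvv W (H * F)
  rw [hdet, norm_one, one_pow, hcompress] at hCS
  have hc := re_det_conjTranspose_mul_mul_le hMK hV hA (fun i j h => hmono i j h) hnn F
  have hg := hWRW.re_det_le_div_card_pow le_rfl
  have hf := (posSemidef_conjTranspose_mul_self F).re_det_le_div_card_pow (t := p0)
    (by rwa [trace_mul_comm])
  rw [Fintype.card_fin] at hg hf
  have hL : 0 ≤ L := prod_nonneg fun i _ => hnn _
  have hg0 : 0 ≤ RCLike.re (W * Rvv * Wᴴ).det := (RCLike.nonneg_iff.mp hWRW.det_nonneg).1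
  have hbound : 1 ≤ (t / M * (p0 / M)) ^ M * L := calc
    1 ≤ RCLike.re (W * Rvv * Wᴴ).det * (L * (p0 / M) ^ M) :=
        hCS.trans (mul_le_mul_of_nonneg_left (hc.trans (by gcongr)) hg0)
    _ ≤ (t / M) ^ M * (L * (p0 / M) ^ M) := by gcongr; exact hg
    _ = (t / M * (p0 / M)) ^ M * L := by ring
  have ht : 0 ≤ t := (RCLike.nonneg_iff.mp hWRW.trace_nonneg).1
  calc (M / p0) * L ^ (-(1:ℝ) / M) ≤ (M / p0) * (t / M * (p0 / M)) := by
        gcongr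
        exact Real.rpow_neg_one_div_le_of_one_le_pow_mul hM.ne' (by positivity) hL hbound
    _ = t / M := by field_simp

/-- Fundamental lower bound on the arithmetic MSE of any zero-forcing block
decision feedback transceiver: `tr(W R_vv Wᴴ)/M ≥ (M/p0) (∏_{i=1}^M λ_i)^(-1/M)`,
where the `λ_i` are the ordered eigenvalues of `Hᴴ R_vv⁻¹ H`. -/
theorem stmt9 (P K M : ℕ) (hM : 0 < M) (hMP : M ≤ P) (hMK : M ≤ K)
    (H : Matrix (Fin P) (Fin K) ℂ)
    (Rvv : Matrix (Fin P) (Fin P) ℂ) (hRvv : Rvv.PosDef)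
    (hrank : M ≤ H.rank)
    (p0 : ℝ) (hp0 : 0 < p0)
    (V : Matrix (Fin K) (Fin K) ℂ) (hV : Vᴴ * V = 1)
    (lam : Fin K → ℝ) (hmono : ∀ i j : Fin K, i ≤ j → lam j ≤ lam i)
    (hnn : ∀ i, 0 ≤ lam i)
    (hA : Hᴴ * Rvv⁻¹ * H = V * Matrix.diagonal (fun i => (lam i : ℂ)) * Vᴴ)
    (F : Matrix (Fin K) (Fin M) ℂ) (W : Matrix (Fin M) (Fin P) ℂ)
    (B : Matrix (Fin M) (Fin M) ℂ) (hB : ∀ i j : Fin M, j ≤ i → B i j = 0)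
    (hpow : (F * Fᴴ).trace.re ≤ p0)
    (hZF : W * H * F = B + 1) :
    (W * Rvv * Wᴴ).trace.re / M ≥
      (M / p0) * (∏ i : Fin M, lam (Fin.castLE hMK i)) ^ (-(1:ℝ)/M) :=
  stmt9_general P K M hM hMK H Rvv hRvv p0 hp0 V hV lam hmono hnn hA F W B hB hpow hZF
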